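/- For every locally integrable function f on ℝ and every x ∈ ℝ, Mf(x) ≤ 6 M^𝒥 f(x), where M is the Hardy–Littlewood maximal operator over all intervals and M^𝒥 is the maximal operator restricted to intervals in 𝒥. -/
import Mathlib


open MeasureTheory ENNReal

/-- The Hardy–Littlewood maximal operator over all (half-open) intervals containing `x`. -/
noncomputable def maxOp (f : ℝ → ℝ) (x : ℝ) : ℝ≥0∞ :=
  ⨆ (a : ℝ) (b : ℝ) (_ : a < b) (_ : x ∈ Set.Ico a b),
    (∫⁻ y in Set.Ico a b, ENNReal.ofReal |f y|) / ENNReal.ofReal (b - a)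

/-- The maximal operator restricted to intervals `[3^j n, 3^j (n+2))`, the family `𝒥`
of unions of two adjacent triadic intervals of equal length. -/
noncomputable def maxOpJ (f : ℝ → ℝ) (x : ℝ) : ℝ≥0∞ :=
  ⨆ (j : ℤ) (n : ℤ) (_ : x ∈ Set.Ico ((3:ℝ)^j * n) ((3:ℝ)^j * (n + 2))),
    (∫⁻ y in Set.Ico ((3:ℝ)^j * n) ((3:ℝ)^j * (n + 2)), ENNReal.ofReal |f y|) /
      ENNReal.ofReal (2 * (3:ℝ)^j)

/-- Pointwise domination `Mf ≤ 6 M^𝒥 f`. -/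
theorem maxOp_le_six_mul_maxOpJ (f : ℝ → ℝ)
    (hf : MeasureTheory.LocallyIntegrable f volume) (x : ℝ) :
    maxOp f x ≤ 6 * maxOpJ f x := by
  rw [maxOp]
  simp only [iSup_le_iff]
  intro a b hab hx
  set ℓ : ℝ := b - a with hℓdef
  have hℓ : 0 < ℓ := sub_pos.mpr hab
  set j : ℤ := ⌈Real.logb 3 ℓ⌉ with hjdef
  have h3 : (1:ℝ) < 3 := by norm_num
  set c : ℝ := (3:ℝ) ^ j with hcdef
  have hc : 0 < c := zpow_pos (by norm_num) j
  -- ℓ ≤ c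
  have h1 : ℓ ≤ c := by
    have : Real.logb 3 ℓ ≤ (j : ℝ) := Int.le_ceil _
    have := (Real.logb_le_iff_le_rpow h3 hℓ).mp this
    rwa [Real.rpow_intCast] at this
  -- c < 3 * ℓ
  have h2 : c < 3 * ℓ := by
    have hj1 : ((j : ℝ) - 1) < Real.logb 3 ℓ := by
      have := Int.ceil_lt_add_one (Real.logb 3 ℓ)
      push_cast at this ⊢
      linarith
    have := (Real.lt_logb_iff_rpow_lt h3 hℓ).mp hj1
    have h3j : (3:ℝ) ^ ((j:ℝ) - 1) = c / 3 := by
      rw [Real.rpow_sub (by norm_num), Real.rpow_one, Real.rpow_intCast]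
    rw [h3j] at this
    linarith
  set n : ℤ := ⌊a / c⌋ with hndef
  have hn1 : c * n ≤ a := by
    have : (n : ℝ) ≤ a / c := Int.floor_le _
    calc c * n ≤ c * (a / c) := by nlinarith
    _ = a := by field_simp
  have hn2 : a < c * (n + 1) := by
    have : a / c < (n : ℝ) + 1 := Int.lt_floor_add_one _
    have := (div_lt_iff₀ hc).mp this
    push_cast
    linarith
  have hb : b ≤ c * (n + 2) := by
    have : b = a + ℓ := by rw [hℓdef]; ring
    push_cast
    push_cast at hn2
    nlinarith
  have hmem : x ∈ Set.Ico ((3:ℝ)^j * n) ((3:ℝ)^j * (n + 2)) := by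
    obtain ⟨hx1, hx2⟩ := hx
    constructor
    · calc (3:ℝ)^j * n = c * n := rfl
      _ ≤ a := hn1
      _ ≤ x := hx1
    · calc x < b := hx2
      _ ≤ c * (n + 2) := hb
      _ = (3:ℝ)^j * (n + 2) := rfl
  have hsub : Set.Ico a b ⊆ Set.Ico ((3:ℝ)^j * ↑n) ((3:ℝ)^j * (↑n + 2)) := by
    intro y hy
    obtain ⟨hy1, hy2⟩ := hy
    exact ⟨le_trans hn1 hy1, lt_of_lt_of_le hy2 (by push_cast; push_cast at hb; linarith)⟩
  set B : ℝ≥0∞ := ∫⁻ y in Set.Ico ((3:ℝ)^j * ↑n) ((3:ℝ)^j * (↑n + 2)), ENNReal.ofReal |f y|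
    with hBdef
  have hAB : (∫⁻ y in Set.Ico a b, ENNReal.ofReal |f y|) ≤ B :=
    lintegral_mono_set hsub
  have key : (∫⁻ y in Set.Ico a b, ENNReal.ofReal |f y|) / ENNReal.ofReal (b - a)
      ≤ 6 * (B / ENNReal.ofReal (2 * (3:ℝ)^j)) := by
    have hdiv : (∫⁻ y in Set.Ico a b, ENNReal.ofReal |f y|) / ENNReal.ofReal (b - a)
        ≤ B / ENNReal.ofReal (c / 3) :=
      ENNReal.div_le_div hAB (ENNReal.ofReal_le_ofReal (by linarith))
    have heq : 6 * (B / ENNReal.ofReal (2 * (3:ℝ)^j)) = B / ENNReal.ofReal (c / 3) := by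
      have h2c : ENNReal.ofReal (2 * (3:ℝ)^j) = 6 * ENNReal.ofReal (c / 3) := by
        rw [← ENNReal.ofReal_ofNat, ← ENNReal.ofReal_mul (by norm_num)]
        congr 1
        rw [hcdef]
        ring
      rw [h2c, ← mul_div_assoc, ENNReal.mul_div_mul_left _ _ (by norm_num) (by norm_num)]
    rw [heq]
    exact hdiv
  refine le_trans key ?_
  gcongr
  rw [maxOpJ]
  exact le_iSup_of_le j (le_iSup_of_le n (le_iSup_of_le hmem le_rfl))
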